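/- arXiv:1712.04631 — 5 statements merged into one kernel-verified Lean document; each statement's English description precedes it below -/
import Mathlib

section
/- Let K be a field of characteristic different from 2 and let L be a nilpotent Lie algebra over K of dimension 3. Then L is isomorphic either to the 3-dimensional abelian Lie algebra K³, or to the Heisenberg algebra h(1) over K, the 3-dimensional Lie algebra with basis v_1, v_2, v_3 whose only nonzero bracket among basis elements is [v_1, v_2] = v_3 = −[v_2, v_1]. -/
noncomputable section

/-!
The Heisenberg Lie algebra `h(m)` over a commutative ring `R`: the
`(2m+1)`-dimensional Lie algebra with basis `v₁, ..., v_{2m}, v`, whose only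
nonzero brackets among basis elements are `[v_{2i-1}, v_{2i}] = v = -[v_{2i}, v_{2i-1}]`.
An element is encoded as `((p, q), t)` where `p i` is the coordinate along
`v_{2i-1}` (for `i = 1, ..., m`), `q i` is the coordinate along `v_{2i}`, and
`t` is the coordinate along the central element `v`.
-/

/-- The underlying module of the Heisenberg algebra `h(m)` over `R`. -/
def Heis (R : Type*) [CommRing R] (m : ℕ) : Type _ := ((Fin m → R) × (Fin m → R)) × R

namespace Heis

variable {R : Type*} [CommRing R] {m : ℕ}

instance : AddCommGroup (Heis R m) :=
  inferInstanceAs (AddCommGroup (((Fin m → R) × (Fin m → R)) × R))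
instance : Module R (Heis R m) :=
  inferInstanceAs (Module R (((Fin m → R) × (Fin m → R)) × R))

/-- The standard symplectic form encoding the structure constants of `h(m)`. -/
def omega (x y : ((Fin m → R) × (Fin m → R)) × R) : R :=
  ∑ i : Fin m, (x.1.1 i * y.1.2 i - x.1.2 i * y.1.1 i)

/-- The bracket of `h(m)`: it takes values in the central line spanned by `v`. -/
def br (x y : ((Fin m → R) × (Fin m → R)) × R) : ((Fin m → R) × (Fin m → R)) × R :=
  (0, omega x y)

lemma br_add_left (x y z : ((Fin m → R) × (Fin m → R)) × R) :
    br (x + y) z = br x z + br y z := by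
  simp only [br, Prod.mk_add_mk, add_zero, Prod.mk.injEq, zero_add]
  refine ⟨by simp, ?_⟩
  simp only [omega, ← Finset.sum_add_distrib, Prod.fst_add, Prod.snd_add, Pi.add_apply]
  exact Finset.sum_congr rfl fun i _ => by ring

lemma br_add_right (x y z : ((Fin m → R) × (Fin m → R)) × R) :
    br x (y + z) = br x y + br x z := by
  simp only [br, Prod.mk_add_mk, add_zero, Prod.mk.injEq, zero_add]
  refine ⟨by simp, ?_⟩
  simp only [omega, ← Finset.sum_add_distrib, Prod.fst_add, Prod.snd_add, Pi.add_apply]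
  exact Finset.sum_congr rfl fun i _ => by ring

lemma omega_br_right (x y z : ((Fin m → R) × (Fin m → R)) × R) :
    omega x (br y z) = 0 := by
  simp [omega, br]

lemma omega_br_left (x y z : ((Fin m → R) × (Fin m → R)) × R) :
    omega (br x y) z = 0 := by
  simp [omega, br]

lemma br_self (x : ((Fin m → R) × (Fin m → R)) × R) : br x x = 0 := by
  have h : omega x x = 0 := Finset.sum_eq_zero fun i _ => by ring
  simp [br, h, Prod.ext_iff]

lemma br_leibniz (x y z : ((Fin m → R) × (Fin m → R)) × R) :
    br x (br y z) = br (br x y) z + br y (br x z) := by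
  show ((0, omega x (br y z)) : ((Fin m → R) × (Fin m → R)) × R) =
    (0, omega (br x y) z) + (0, omega y (br x z))
  rw [omega_br_right, omega_br_left, omega_br_right]
  simp

lemma br_smul (c : R) (x y : ((Fin m → R) × (Fin m → R)) × R) :
    br x (c • y) = c • br x y := by
  have h : omega x (c • y) = c * omega x y := by
    simp only [omega, Finset.mul_sum, Prod.smul_fst, Prod.smul_snd, Pi.smul_apply, smul_eq_mul]
    exact Finset.sum_congr rfl fun i _ => by ring
  simp [br, h, Prod.ext_iff, smul_eq_mul]

instance : LieRing (Heis R m) where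
  bracket x y := br x y
  add_lie x y z := br_add_left x y z
  lie_add x y z := br_add_right x y z
  lie_self x := br_self x
  leibniz_lie x y z := br_leibniz x y z

instance : LieAlgebra R (Heis R m) where
  lie_smul c x y := br_smul c x y

/-- The basis vector `v_{2i-1}` of `h(m)`. -/
def vodd (i : Fin m) : Heis R m := (((Pi.single i 1 : Fin m → R), 0), 0)

/-- The basis vector `v_{2i}` of `h(m)`. -/
def veven (i : Fin m) : Heis R m := (((0 : Fin m → R), (Pi.single i 1 : Fin m → R)), 0)

/-- The central basis vector `v` of `h(m)`. -/
def vz : Heis R m := ((0, 0), 1)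

end Heis

/-- The abelian Lie algebra of dimension `n` over `K` (i.e. `Kⁿ` with zero bracket). -/
def AbelianLie (K : Type*) [CommRing K] (n : ℕ) : Type _ := Fin n → K

namespace AbelianLie

variable {K : Type*} [CommRing K] {n : ℕ}

instance : AddCommGroup (AbelianLie K n) := inferInstanceAs (AddCommGroup (Fin n → K))
instance : Module K (AbelianLie K n) := inferInstanceAs (Module K (Fin n → K))

instance : LieRing (AbelianLie K n) where
  bracket _ _ := 0
  add_lie _ _ _ := (zero_add 0).symm
  lie_add _ _ _ := (zero_add 0).symm
  lie_self _ := rfl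
  leibniz_lie _ _ _ := (zero_add 0).symm

instance : LieAlgebra K (AbelianLie K n) where
  lie_smul c _ _ := (smul_zero c).symm

instance : IsLieAbelian (AbelianLie K n) := ⟨fun _ _ => rfl⟩

end AbelianLie

/-!
Every `ad x` of a nilpotent Lie algebra is nilpotent, so it has no nonzero eigenvalue.
If `L` is not abelian, pick `a, b` with `c = ⁅a, b⁆ ≠ 0`. For `v = p a + q b + r c` with
`⁅a, v⁆ = ⁅b, v⁆ = 0` we get `q c + r ⁅a, c⁆ = 0` and `-p c + r ⁅b, c⁆ = 0`, and the
eigenvalue argument forces `p = q = 0`. Applied to `v = 0` this makes `a, b, c` a basis;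
applied to a nonzero central `v`, which exists by nilpotency, it shows that `c` is central.
So `a, b, c` have the structure constants of `h(1)`.
-/

namespace LieModule

variable {K L M : Type*} [Field K] [LieRing L] [LieAlgebra K L] [AddCommGroup M] [Module K M]
  [LieRingModule L M] [LieModule K L M] [IsNilpotent L M]

lemma eq_zero_of_lie_eq_smul {x : L} {m : M} (hm : m ≠ 0) {μ : K} (h : ⁅x, m⁆ = μ • m) :
    μ = 0 :=
  ((Module.End.hasEigenvalue_of_hasEigenvector ⟨Module.End.mem_eigenspace_iff.mpr h, hm⟩)
    |>.isNilpotent_of_isNilpotent (isNilpotent_toEnd_of_isNilpotent K L M x)).eq_zero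

lemma eq_zero_of_smul_add_smul_lie_eq_zero {x : L} {m : M} (hm : m ≠ 0) {q r : K}
    (h : q • m + r • ⁅x, m⁆ = 0) : q = 0 := by
  by_cases hr : r = 0
  · simpa [hr, hm] using h
  · have hxm : ⁅x, m⁆ = (-q / r) • m := by
      rw [← inv_smul_smul₀ hr ⁅x, m⁆, eq_neg_of_add_eq_zero_right h, smul_neg, smul_smul,
        ← neg_smul, neg_div, inv_mul_eq_div]
    simpa [hr] using eq_zero_of_lie_eq_smul hm hxm

end LieModule

namespace LieAlgebra

variable {K L : Type*} [Field K] [LieRing L] [LieAlgebra K L] [LieModule.IsNilpotent L L]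

lemma coeffs_eq_zero_of_lie_eq_zero {a b : L} (hab : ⁅a, b⁆ ≠ 0) {p q r : K}
    (ha : ⁅a, p • a + q • b + r • ⁅a, b⁆⁆ = 0)
    (hb : ⁅b, p • a + q • b + r • ⁅a, b⁆⁆ = 0) :
    p = 0 ∧ q = 0 := by
  have hp : (-p) • ⁅a, b⁆ + r • ⁅b, ⁅a, b⁆⁆ = 0 := by
    rw [← hb]
    simp only [lie_add, lie_smul, lie_self, smul_zero, add_zero]
    rw [← lie_skew b a]
    module
  have hq : q • ⁅a, b⁆ + r • ⁅a, ⁅a, b⁆⁆ = 0 := by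
    rw [← ha]
    simp only [lie_add, lie_smul, lie_self, smul_zero, zero_add]
  exact ⟨neg_eq_zero.mp (LieModule.eq_zero_of_smul_add_smul_lie_eq_zero hab hp),
    LieModule.eq_zero_of_smul_add_smul_lie_eq_zero hab hq⟩

lemma linearIndependent_of_lie_ne_zero {a b : L} (hab : ⁅a, b⁆ ≠ 0) :
    LinearIndependent K ![a, b, ⁅a, b⁆] := by
  rw [Fintype.linearIndependent_iff]
  intro g hg
  simp only [Fin.sum_univ_three, Matrix.cons_val_zero, Matrix.cons_val_one,
    Matrix.cons_val_two, Matrix.head_cons, Matrix.tail_cons] at hg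
  obtain ⟨hp, hq⟩ := coeffs_eq_zero_of_lie_eq_zero hab (by rw [hg, lie_zero])
    (by rw [hg, lie_zero])
  have hr : g 2 = 0 := by simpa [hp, hq, hab] using hg
  intro i
  fin_cases i <;> assumption

def basisOfLieNeZero (hdim : Module.finrank K L = 3) {a b : L} (hab : ⁅a, b⁆ ≠ 0) :
    Module.Basis (Fin 3) K L :=
  basisOfLinearIndependentOfCardEqFinrank (linearIndependent_of_lie_ne_zero hab) (by simp [hdim])

lemma coe_basisOfLieNeZero (hdim : Module.finrank K L = 3) {a b : L} (hab : ⁅a, b⁆ ≠ 0) :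
    ⇑(basisOfLieNeZero hdim hab) = ![a, b, ⁅a, b⁆] :=
  coe_basisOfLinearIndependentOfCardEqFinrank _ _

lemma lie_mem_center_of_finrank_eq_three (hdim : Module.finrank K L = 3) {a b : L}
    (hab : ⁅a, b⁆ ≠ 0) : ⁅a, b⁆ ∈ center K L := by
  have : Nontrivial L := Module.nontrivial_of_finrank_eq_succ hdim
  have := LieModule.nontrivial_max_triv_of_isNilpotent K L L
  obtain ⟨⟨z, hz⟩, hz0⟩ := exists_ne (0 : center K L)
  let B := basisOfLieNeZero hdim hab
  have hzB : z = B.repr z 0 • a + B.repr z 1 • b + B.repr z 2 • ⁅a, b⁆ := by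
    conv_lhs => rw [← B.sum_repr z]
    simp [Fin.sum_univ_three, B, coe_basisOfLieNeZero]
  obtain ⟨hp, hq⟩ := coeffs_eq_zero_of_lie_eq_zero hab
    (hzB ▸ (LieModule.mem_maxTrivSubmodule K L L z).mp hz a)
    (hzB ▸ (LieModule.mem_maxTrivSubmodule K L L z).mp hz b)
  rw [hp, hq, zero_smul, zero_smul, zero_add, zero_add] at hzB
  have hr : B.repr z 2 ≠ 0 := fun hr => hz0 (by simpa [hr] using hzB)
  rw [hzB] at hz
  simpa [smul_smul, hr] using (center K L).smul_mem (B.repr z 2)⁻¹ hz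

end LieAlgebra

namespace AbelianLie

variable {R L : Type*} [CommRing R] [LieRing L] [LieAlgebra R L] [IsLieAbelian L] {n : ℕ}

def lieEquivOfBasis (B : Module.Basis (Fin n) R L) : L ≃ₗ⁅R⁆ AbelianLie R n :=
  { B.equivFun with
    map_lie' := by
      intro x y
      change B.equivFun ⁅x, y⁆ = 0
      rw [trivial_lie_zero, map_zero] }

end AbelianLie

namespace Heis

variable {R L : Type*} [CommRing R] [LieRing L] [LieAlgebra R L]

def equivFun : Heis R 1 ≃ₗ[R] (Fin 3 → R) where
  toFun x := ![x.1.1 0, x.1.2 0, x.2]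
  invFun f := ((fun _ => f 0, fun _ => f 1), f 2)
  map_add' _ _ := by ext i; fin_cases i <;> rfl
  map_smul' _ _ := by ext i; fin_cases i <;> rfl
  left_inv x := by
    refine Prod.ext (Prod.ext ?_ ?_) rfl <;> funext i <;> rw [Subsingleton.elim i 0] <;> rfl
  right_inv f := by ext i; fin_cases i <;> rfl

lemma lie_eq_omega_smul_vz {m : ℕ} (x y : Heis R m) :
    ⁅x, y⁆ = omega x y • (vz : Heis R m) := by
  change ((0, omega x y) : ((Fin m → R) × (Fin m → R)) × R) =
    ((omega x y • 0, omega x y • 0), omega x y * 1)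
  rw [smul_zero, mul_one]
  rfl

lemma equivFun_apply (x : Heis R 1) : equivFun x = ![x.1.1 0, x.1.2 0, x.2] := rfl

def equivOfBasis (B : Module.Basis (Fin 3) R L) : Heis R 1 ≃ₗ[R] L :=
  equivFun.trans B.equivFun.symm

lemma equivOfBasis_apply (B : Module.Basis (Fin 3) R L) (x : Heis R 1) :
    equivOfBasis B x = x.1.1 0 • B 0 + x.1.2 0 • B 1 + x.2 • B 2 := by
  simp [equivOfBasis, Module.Basis.equivFun_symm_apply, Fin.sum_univ_three, equivFun_apply]

lemma equivOfBasis_lie (B : Module.Basis (Fin 3) R L) (h01 : ⁅B 0, B 1⁆ = B 2)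
    (h2 : B 2 ∈ LieAlgebra.center R L) (x y : Heis R 1) :
    equivOfBasis B ⁅x, y⁆ = ⁅equivOfBasis B x, equivOfBasis B y⁆ := by
  have h10 : ⁅B 1, B 0⁆ = -B 2 := by rw [← lie_skew, h01]
  have hc : ∀ z, ⁅z, B 2⁆ = 0 := (LieModule.mem_maxTrivSubmodule R L L _).mp h2
  have hc' : ∀ z : L, ⁅B 2, z⁆ = 0 := fun z => by rw [← lie_skew, hc, neg_zero]
  rw [lie_eq_omega_smul_vz, map_smul, equivOfBasis_apply, equivOfBasis_apply,
    equivOfBasis_apply]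
  simp only [lie_add, add_lie, lie_smul, smul_lie, lie_self, h01, h10, hc, hc', smul_zero,
    add_zero]
  simp only [omega, vz, Fin.sum_univ_one, Pi.zero_apply]
  module

def lieEquivOfBasis (B : Module.Basis (Fin 3) R L) (h01 : ⁅B 0, B 1⁆ = B 2)
    (h2 : B 2 ∈ LieAlgebra.center R L) : L ≃ₗ⁅R⁆ Heis R 1 :=
  LieEquiv.symm { equivOfBasis B with map_lie' := equivOfBasis_lie B h01 h2 _ _ }

end Heis

theorem nilpotent_lieAlgebra_dim3_classification_general {K : Type*} [Field K]
    {L : Type*} [LieRing L] [LieAlgebra K L]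
    [LieModule.IsNilpotent L L] (hdim : Module.finrank K L = 3) :
    Nonempty (L ≃ₗ⁅K⁆ AbelianLie K 3) ∨ Nonempty (L ≃ₗ⁅K⁆ Heis K 1) := by
  have : Module.Finite K L := Module.finite_of_finrank_eq_succ hdim
  by_cases habel : IsLieAbelian L
  · exact Or.inl ⟨AbelianLie.lieEquivOfBasis (Module.finBasisOfFinrankEq K L hdim)⟩
  obtain ⟨a, b, hab⟩ : ∃ a b : L, ⁅a, b⁆ ≠ 0 := by
    by_contra! h
    exact habel ⟨h⟩
  have hB := LieAlgebra.coe_basisOfLieNeZero hdim hab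
  refine Or.inr ⟨Heis.lieEquivOfBasis (LieAlgebra.basisOfLieNeZero hdim hab) (by simp [hB]) ?_⟩
  simpa [hB] using LieAlgebra.lie_mem_center_of_finrank_eq_three hdim hab

/-- (de Graaf's classification in dimension 3.) Over a field `K` of
characteristic `≠ 2`, every nilpotent Lie algebra of dimension 3 is isomorphic either
to the abelian Lie algebra `K³`, or to the Heisenberg algebra `h(1)` over `K`. -/
theorem nilpotent_lieAlgebra_dim3_classification {K : Type*} [Field K]
    (hchar : ringChar K ≠ 2) {L : Type*} [LieRing L] [LieAlgebra K L]
    [LieModule.IsNilpotent L L] (hdim : Module.finrank K L = 3) :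
    Nonempty (L ≃ₗ⁅K⁆ AbelianLie K 3) ∨ Nonempty (L ≃ₗ⁅K⁆ Heis K 1) :=
  nilpotent_lieAlgebra_dim3_classification_general hdim
end
end

section
/- Let K be a field of characteristic different from 2 and let L be a nilpotent Lie algebra over K of dimension 4. Then L is isomorphic to one of the following: the 4-dimensional abelian Lie algebra K⁴; the direct product h(1) × K of the Heisenberg algebra h(1) with the 1-dimensional abelian Lie algebra; or the Lie algebra l_{4,3} with basis v_1, v_2, v_3, v_4 whose only nonzero brackets among basis elements are [v_1, v_2] = v_3 and [v_1, v_3] = v_4 (and their antisymmetric counterparts). -/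
noncomputable section
set_option linter.unnecessarySeqFocus false

/-- The nilpotent Lie algebra `l_{4,3}` over `K`: basis `v₁, v₂, v₃, v₄` with
`[v₁,v₂] = v₃` and `[v₁,v₃] = v₄` the only nonzero brackets among basis elements. -/
def L43 (K : Type*) [CommRing K] : Type _ := Fin 4 → K

namespace L43

variable {K : Type*} [CommRing K]

instance : AddCommGroup (L43 K) := inferInstanceAs (AddCommGroup (Fin 4 → K))
instance : Module K (L43 K) := inferInstanceAs (Module K (Fin 4 → K))

/-- The bracket of `l_{4,3}` in coordinates. -/
def br (x y : Fin 4 → K) : Fin 4 → K :=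
  ![0, 0, x 0 * y 1 - x 1 * y 0, x 0 * y 2 - x 2 * y 0]

lemma br_add_left (x y z : Fin 4 → K) : br (x + y) z = br x z + br y z := by
  funext i
  fin_cases i <;> simp [br] <;> ring

lemma br_add_right (x y z : Fin 4 → K) : br x (y + z) = br x y + br x z := by
  funext i
  fin_cases i <;> simp [br] <;> ring

lemma br_self (x : Fin 4 → K) : br x x = 0 := by
  funext i
  fin_cases i <;> simp [br] <;> ring

lemma br_leibniz (x y z : Fin 4 → K) :
    br x (br y z) = br (br x y) z + br y (br x z) := by
  funext i
  fin_cases i <;> simp [br] <;> ring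

lemma br_smul (c : K) (x y : Fin 4 → K) : br x (c • y) = c • br x y := by
  funext i
  fin_cases i <;> simp [br] <;> ring

instance : LieRing (L43 K) where
  bracket x y := br x y
  add_lie x y z := br_add_left x y z
  lie_add x y z := br_add_right x y z
  lie_self x := br_self x
  leibniz_lie x y z := br_leibniz x y z

instance : LieAlgebra K (L43 K) where
  lie_smul c x y := br_smul c x y

end L43

/-! The direct product of two Lie algebras, with componentwise bracket. -/

section ProdLie

variable {R : Type*} [CommRing R] {L M : Type*} [LieRing L] [LieRing M]

instance Prod.instBracketLie : Bracket (L × M) (L × M) :=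
  ⟨fun x y => (⁅x.1, y.1⁆, ⁅x.2, y.2⁆)⟩

@[simp] lemma Prod.bracket_def (x y : L × M) : ⁅x, y⁆ = (⁅x.1, y.1⁆, ⁅x.2, y.2⁆) := rfl

instance Prod.instLieRing : LieRing (L × M) where
  add_lie x y z := Prod.ext (add_lie x.1 y.1 z.1) (add_lie x.2 y.2 z.2)
  lie_add x y z := Prod.ext (lie_add x.1 y.1 z.1) (lie_add x.2 y.2 z.2)
  lie_self x := Prod.ext (lie_self x.1) (lie_self x.2)
  leibniz_lie x y z := Prod.ext (leibniz_lie x.1 y.1 z.1) (leibniz_lie x.2 y.2 z.2)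

instance Prod.instLieAlgebra [LieAlgebra R L] [LieAlgebra R M] : LieAlgebra R (L × M) where
  lie_smul c x y := Prod.ext (lie_smul c x.1 y.1) (lie_smul c x.2 y.2)

end ProdLie


/-!
Write `L¹ = [L, L]`, `L² = [L, L¹]`, `L³ = [L, L²]`. In a nilpotent Lie algebra the lower central
series strictly decreases until it reaches `0`, and if `V + L¹ = L` then `L¹` is spanned modulo
`L²` by the brackets of elements of `V`. Hence `L/L¹` has dimension at least `2`, so
`dim L¹ ≤ 2`.

If `L¹ = 0`, `L` is abelian. If `dim L¹ = 1`, then `L¹ = K [p, q]` is central, and a vector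
outside `span {p, q, [p, q]}`, corrected by multiples of `p` and `q`, commutes with `p` and `q`:
this gives `h(1) × K`. If `dim L¹ = 2`, write `L = span {x, y} + L¹`; then `L¹ = K [x, y] + L²`,
so `dim L² = 1` and `L³ = 0`. One of `[x, [x, y]]`, `[y, [x, y]]` is nonzero (otherwise `L¹` is
central and `L² = 0`); swapping `x, y` and replacing `y` by `y - c x` makes
`x, y, [x, y], [x, [x, y]]` satisfy the relations of `l_{4,3}`.

In both non-abelian cases the four vectors are linearly independent because each one is moved
by an inner derivation (or its square) that kills the later ones.
-/

open LieModule Module Submodule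

lemma Submodule.notMem_span_range_of_map_eq_zero {R M N ι : Type*} [Semiring R] [AddCommMonoid M]
    [Module R M] [AddCommMonoid N] [Module R N] (f : M →ₗ[R] N) {v : ι → M} {x : M}
    (hv : ∀ i, f (v i) = 0) (hx : f x ≠ 0) : x ∉ span R (Set.range v) :=
  fun h => hx ((span_le (p := LinearMap.ker f)).2 (Set.range_subset_iff.2 hv) h)

lemma Submodule.exists_span_pair_sup_eq_top {K V : Type*} [DivisionRing K] [AddCommGroup V]
    [Module K V] [FiniteDimensional K V] {p : Submodule K V} (hp : finrank K p + 2 = finrank K V) :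
    ∃ x y : V, span K {x, y} ⊔ p = ⊤ := by
  obtain ⟨x, -, hx⟩ := SetLike.exists_of_lt (show p < ⊤ from lt_top_iff_ne_top.2 fun h => by
    rw [h, finrank_top] at hp; omega)
  obtain ⟨y, -, hy⟩ := SetLike.exists_of_lt (show p ⊔ K ∙ x < ⊤ from lt_top_iff_ne_top.2 fun h => by
    have := finrank_sup_span_singleton hx
    rw [h, finrank_top] at this; omega)
  have hxy : span K {x, y} ⊔ p = p ⊔ K ∙ x ⊔ K ∙ y := by
    rw [span_insert]
    ac_rfl
  refine ⟨x, y, eq_top_of_finrank_eq ?_⟩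
  rw [hxy, finrank_sup_span_singleton hy, finrank_sup_span_singleton hx]
  omega

def LieEquiv.ofLinearEquiv {R L₁ L₂ : Type*} [CommRing R] [LieRing L₁] [LieAlgebra R L₁]
    [LieRing L₂] [LieAlgebra R L₂] (e : L₁ ≃ₗ[R] L₂) (h : ∀ x y, e ⁅x, y⁆ = ⁅e x, e y⁆) :
    L₁ ≃ₗ⁅R⁆ L₂ :=
  { e with map_lie' := fun {x y} => h x y }

lemma lie_eq_neg_of_lie_eq {L : Type*} [LieRing L] {x y z : L} (h : ⁅x, y⁆ = z) : ⁅y, x⁆ = -z := by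
  rw [← lie_skew, h]

namespace LieModule

variable {R L M : Type*} [CommRing R] [LieRing L] [LieAlgebra R L] [AddCommGroup M] [Module R M]
  [LieRingModule L M] [LieModule R L M]

lemma lowerCentralSeries_succ_le_iff {k : ℕ} {N : Submodule R M} :
    (lowerCentralSeries R L M (k + 1) : Submodule R M) ≤ N ↔
      ∀ (x : L), ∀ m ∈ lowerCentralSeries R L M k, ⁅x, m⁆ ∈ N := by
  rw [lowerCentralSeries_succ, LieSubmodule.lieIdeal_oper_eq_linear_span', span_le]
  refine ⟨fun h x m hm => h ⟨x, LieSubmodule.mem_top x, m, hm, rfl⟩, ?_⟩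
  rintro h - ⟨x, -, m, hm, rfl⟩
  exact h x m hm

lemma lie_mem_lowerCentralSeries_succ (x : L) {k : ℕ} {m : M}
    (hm : m ∈ lowerCentralSeries R L M k) : ⁅x, m⁆ ∈ lowerCentralSeries R L M (k + 1) :=
  lowerCentralSeries_succ_le_iff.1 le_rfl x m hm

lemma lie_mem_lowerCentralSeries_one (x : L) (m : M) : ⁅x, m⁆ ∈ lowerCentralSeries R L M 1 :=
  lie_mem_lowerCentralSeries_succ x (by simp)

lemma lowerCentralSeries_eq_bot_of_succ_eq [IsNilpotent L M] {k : ℕ}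
    (h : lowerCentralSeries R L M (k + 1) = lowerCentralSeries R L M k) :
    lowerCentralSeries R L M k = ⊥ := by
  have hconst (j : ℕ) : lowerCentralSeries R L M (k + j) = lowerCentralSeries R L M k := by
    induction j with
    | zero => rfl
    | succ j ih => rw [← add_assoc, lowerCentralSeries_succ, ih, ← lowerCentralSeries_succ, h]
  obtain ⟨n, hn⟩ := IsNilpotent.nilpotent R L M
  rw [← hconst n, eq_bot_iff, ← hn]
  exact antitone_lowerCentralSeries R L M (Nat.le_add_left n k)

lemma lowerCentralSeries_succ_lt [IsNilpotent L M] {k : ℕ}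
    (h : lowerCentralSeries R L M k ≠ ⊥) :
    lowerCentralSeries R L M (k + 1) < lowerCentralSeries R L M k :=
  (antitone_lowerCentralSeries R L M k.le_succ).lt_of_ne
    (mt lowerCentralSeries_eq_bot_of_succ_eq h)

end LieModule

section LowerCentralSeries

variable {K L : Type*} [Field K] [LieRing L] [LieAlgebra K L]

lemma finrank_lowerCentralSeries_succ_lt [LieRing.IsNilpotent L] [FiniteDimensional K L] {k : ℕ}
    (h : lowerCentralSeries K L L k ≠ ⊥) :
    finrank K (lowerCentralSeries K L L (k + 1)).toSubmodule <
      finrank K (lowerCentralSeries K L L k).toSubmodule :=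
  finrank_lt_finrank_of_lt
    ((LieSubmodule.toSubmodule_orderEmbedding K L L).lt_iff_lt.2 (lowerCentralSeries_succ_lt h))

lemma lowerCentralSeries_succ_eq_bot_of_finrank_le_one [LieRing.IsNilpotent L]
    [FiniteDimensional K L] {k : ℕ}
    (h : finrank K (lowerCentralSeries K L L k).toSubmodule ≤ 1) :
    lowerCentralSeries K L L (k + 1) = ⊥ := by
  by_cases hk : lowerCentralSeries K L L k = ⊥
  · exact eq_bot_iff.2 (hk ▸ antitone_lowerCentralSeries K L L k.le_succ)
  · have := finrank_lowerCentralSeries_succ_lt hk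
    rw [← LieSubmodule.toSubmodule_eq_bot, ← finrank_eq_zero]
    omega

lemma lowerCentralSeries_one_le_of_sup_eq_top {V N : Submodule K L}
    (hV : V ⊔ (lowerCentralSeries K L L 1).toSubmodule = ⊤)
    (h2 : (lowerCentralSeries K L L 2).toSubmodule ≤ N)
    (hVV : ∀ x ∈ V, ∀ y ∈ V, ⁅x, y⁆ ∈ N) :
    (lowerCentralSeries K L L 1).toSubmodule ≤ N := by
  have hlie (u : L) (hu : ∀ v ∈ V, ⁅u, v⁆ ∈ N) (b : L) : ⁅u, b⁆ ∈ N := by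
    have : V ⊔ (lowerCentralSeries K L L 1).toSubmodule ≤ N.comap (toEnd K L L u) :=
      sup_le hu fun d hd => h2 (lie_mem_lowerCentralSeries_succ u hd)
    exact this (hV ▸ mem_top)
  refine lowerCentralSeries_succ_le_iff.2 fun a b _ => hlie a (fun v hv => ?_) b
  rw [← lie_skew]
  exact N.neg_mem (hlie v (hVV v hv) a)

lemma lie_eq_zero_of_finrank_le_one [FiniteDimensional K L] {V : Submodule K L}
    (hV : finrank K V ≤ 1) {x y : L} (hx : x ∈ V) (hy : y ∈ V) : ⁅x, y⁆ = 0 := by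
  obtain ⟨v, hv⟩ := finrank_le_one_iff.1 hV
  obtain ⟨a, ha⟩ := hv ⟨x, hx⟩
  obtain ⟨b, hb⟩ := hv ⟨y, hy⟩
  obtain rfl : a • (v : L) = x := congrArg Subtype.val ha
  obtain rfl : b • (v : L) = y := congrArg Subtype.val hb
  simp

lemma finrank_lowerCentralSeries_one_add_two_le [LieRing.IsNilpotent L] [FiniteDimensional K L]
    (h : lowerCentralSeries K L L 1 ≠ ⊥) :
    finrank K (lowerCentralSeries K L L 1).toSubmodule + 2 ≤ finrank K L := by
  by_contra! hlt
  obtain ⟨C, hC⟩ := (lowerCentralSeries K L L 1).toSubmodule.exists_isCompl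
  have hC1 : finrank K C ≤ 1 := by
    have := finrank_add_eq_of_isCompl hC
    omega
  have hle := lowerCentralSeries_one_le_of_sup_eq_top hC.symm.sup_eq_top le_rfl
    fun x hx y hy => by rw [lie_eq_zero_of_finrank_le_one hC1 hx hy]; exact zero_mem _
  exact (lowerCentralSeries_succ_lt h).not_ge hle

lemma lowerCentralSeries_one_le_span_pair_sup {x y : L}
    (hxy : span K {x, y} ⊔ (lowerCentralSeries K L L 1).toSubmodule = ⊤) :
    (lowerCentralSeries K L L 1).toSubmodule ≤
      K ∙ ⁅x, y⁆ ⊔ (lowerCentralSeries K L L 2).toSubmodule := by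
  refine lowerCentralSeries_one_le_of_sup_eq_top hxy le_sup_right fun a ha b hb => ?_
  obtain ⟨α, β, rfl⟩ := mem_span_pair.1 ha
  obtain ⟨γ, δ, rfl⟩ := mem_span_pair.1 hb
  have : ⁅α • x + β • y, γ • x + δ • y⁆ = (α * δ - β * γ) • ⁅x, y⁆ := by
    simp only [lie_add, add_lie, lie_smul, smul_lie, lie_self, ← lie_skew y x]
    module
  rw [this]
  exact mem_sup_left (smul_mem _ _ (mem_span_singleton_self _))

lemma finrank_lowerCentralSeries_two_add_one [LieRing.IsNilpotent L] [FiniteDimensional K L]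
    (hcodim : finrank K (lowerCentralSeries K L L 1).toSubmodule + 2 = finrank K L)
    (h : lowerCentralSeries K L L 1 ≠ ⊥) :
    finrank K (lowerCentralSeries K L L 2).toSubmodule + 1 =
      finrank K (lowerCentralSeries K L L 1).toSubmodule := by
  obtain ⟨x, y, hxy⟩ := exists_span_pair_sup_eq_top hcodim
  have hle := finrank_mono (lowerCentralSeries_one_le_span_pair_sup hxy)
  have hsup := finrank_add_le_finrank_add_finrank (K ∙ ⁅x, y⁆)
    (lowerCentralSeries K L L 2).toSubmodule
  have hz : finrank K (K ∙ ⁅x, y⁆) ≤ 1 := (finrank_span_le_card ({⁅x, y⁆} : Set L)).trans (by simp)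
  have hlt : finrank K (lowerCentralSeries K L L 2).toSubmodule <
      finrank K (lowerCentralSeries K L L 1).toSubmodule := finrank_lowerCentralSeries_succ_lt h
  omega

lemma exists_lie_lie_ne_zero [FiniteDimensional K L]
    (hcodim : finrank K (lowerCentralSeries K L L 1).toSubmodule + 2 = finrank K L)
    (h2 : lowerCentralSeries K L L 2 ≠ ⊥) (h3 : lowerCentralSeries K L L 3 = ⊥) :
    ∃ x y : L, ⁅x, ⁅x, y⁆⁆ ≠ 0 := by
  obtain ⟨x, y, hxy⟩ := exists_span_pair_sup_eq_top hcodim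
  by_contra! h
  have hD2 : (lowerCentralSeries K L L 2).toSubmodule ≤ (LieAlgebra.center K L).toSubmodule :=
    fun d hd => (mem_maxTrivSubmodule K L L d).2 fun a => by
      have : ⁅a, d⁆ ∈ lowerCentralSeries K L L 3 := lie_mem_lowerCentralSeries_succ a hd
      rwa [h3, LieSubmodule.mem_bot] at this
  have hz : ⁅x, y⁆ ∈ LieAlgebra.center K L := by
    have hzx : ⁅⁅x, y⁆, x⁆ = 0 := by rw [← lie_skew, h, neg_zero]
    have hzy : ⁅⁅x, y⁆, y⁆ = 0 := by rw [← lie_skew, ← lie_skew x y, lie_neg, neg_neg, h]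
    have hker : span K {x, y} ⊔ (lowerCentralSeries K L L 1).toSubmodule ≤
        LinearMap.ker (toEnd K L L ⁅x, y⁆) := by
      refine sup_le (span_le.2 ?_) ((lowerCentralSeries_one_le_span_pair_sup hxy).trans
        (sup_le ((span_singleton_le_iff_mem _ _).2 ?_) fun d hd => ?_)) <;>
        simp only [Set.insert_subset_iff, Set.singleton_subset_iff, SetLike.mem_coe,
          LinearMap.mem_ker, toEnd_apply_apply]
      · exact ⟨hzx, hzy⟩
      · exact lie_self _
      · exact (mem_maxTrivSubmodule K L L d).1 (hD2 hd) ⁅x, y⁆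
    refine (mem_maxTrivSubmodule K L L _).2 fun a => ?_
    rw [← lie_skew, neg_eq_zero]
    exact hker (hxy ▸ mem_top)
  have hD1 : (lowerCentralSeries K L L 1).toSubmodule ≤ (LieAlgebra.center K L).toSubmodule :=
    (lowerCentralSeries_one_le_span_pair_sup hxy).trans
      (sup_le ((span_singleton_le_iff_mem _ _).2 hz) hD2)
  refine h2 ((LieSubmodule.toSubmodule_eq_bot _).1 (eq_bot_iff.2
    (lowerCentralSeries_succ_le_iff.2 fun a m hm => ?_)))
  exact (mem_bot K).2 ((mem_maxTrivSubmodule K L L m).1 (hD1 hm) a)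

end LowerCentralSeries

lemma Heis.lie_eq_br {R : Type*} [CommRing R] {m : ℕ} (x y : Heis R m) : ⁅x, y⁆ = Heis.br x y :=
  rfl

lemma AbelianLie.lie_apply {K : Type*} [CommRing K] {n : ℕ} (x y : AbelianLie K n) (i : Fin n) :
    ⁅x, y⁆ i = 0 :=
  rfl

lemma L43.lie_eq_br {K : Type*} [CommRing K] (x y : L43 K) : ⁅x, y⁆ = L43.br x y := rfl

def heisProdEquivFun (K : Type*) [CommRing K] : (Heis K 1 × AbelianLie K 1) ≃ₗ[K] (Fin 4 → K) where
  toFun x := ![x.1.1.1 0, x.1.1.2 0, x.1.2, x.2 0]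
  map_add' x y := by funext i; fin_cases i <;> rfl
  map_smul' t x := by funext i; fin_cases i <;> rfl
  invFun v := (((fun _ => v 0, fun _ => v 1), v 2), fun _ => v 3)
  left_inv x := by
    refine Prod.ext (Prod.ext (Prod.ext ?_ ?_) rfl) ?_ <;> (funext j; fin_cases j <;> rfl)
  right_inv v := by funext i; fin_cases i <;> rfl

section Recognition

variable {K L : Type*} [Field K] [LieRing L] [LieAlgebra K L]

lemma nonempty_lieEquiv_abelianLie [IsLieAbelian L] [FiniteDimensional K L] {n : ℕ}
    (h : finrank K L = n) : Nonempty (L ≃ₗ⁅K⁆ AbelianLie K n) := by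
  let e : AbelianLie K n ≃ₗ[K] L := (finBasisOfFinrankEq K L h).equivFun.symm
  exact ⟨(LieEquiv.ofLinearEquiv e fun x y => by
    rw [trivial_lie_zero, trivial_lie_zero, map_zero]).symm⟩

lemma nonempty_lieEquiv_heisProd_of_linearIndependent (hdim : finrank K L = 4) {v : Fin 4 → L}
    (hv : LinearIndependent K v) (h01 : ⁅v 0, v 1⁆ = v 2) (h2 : ∀ x : L, ⁅x, v 2⁆ = 0)
    (h03 : ⁅v 0, v 3⁆ = 0) (h13 : ⁅v 1, v 3⁆ = 0) :
    Nonempty (L ≃ₗ⁅K⁆ Heis K 1 × AbelianLie K 1) := by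
  let b := basisOfLinearIndependentOfCardEqFinrank hv (by simp [hdim])
  let e := (heisProdEquivFun K).trans b.equivFun.symm
  have he (x : Heis K 1 × AbelianLie K 1) :
      e x = x.1.1.1 0 • v 0 + x.1.1.2 0 • v 1 + x.1.2 • v 2 + x.2 0 • v 3 := by
    simp [e, b, Fin.sum_univ_four, heisProdEquivFun]
  refine ⟨(LieEquiv.ofLinearEquiv e fun x y => ?_).symm⟩
  rw [he, he, he]
  simp only [Prod.bracket_def, Heis.lie_eq_br, AbelianLie.lie_apply, Heis.br, Heis.omega,
    Fin.sum_univ_one, Prod.fst_zero, Prod.snd_zero, Pi.zero_apply, lie_add, add_lie, lie_smul,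
    smul_lie, lie_self, h01, h2, h03, h13, lie_eq_neg_of_lie_eq (h2 _), lie_eq_neg_of_lie_eq h01,
    lie_eq_neg_of_lie_eq h03, lie_eq_neg_of_lie_eq h13, zero_smul, smul_zero]
  module

lemma nonempty_lieEquiv_l43_of_linearIndependent (hdim : finrank K L = 4) {v : Fin 4 → L}
    (hv : LinearIndependent K v) (h01 : ⁅v 0, v 1⁆ = v 2) (h02 : ⁅v 0, v 2⁆ = v 3)
    (h12 : ⁅v 1, v 2⁆ = 0) (h3 : ∀ x : L, ⁅x, v 3⁆ = 0) : Nonempty (L ≃ₗ⁅K⁆ L43 K) := by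
  let b := basisOfLinearIndependentOfCardEqFinrank hv (by simp [hdim])
  let e : L43 K ≃ₗ[K] L := b.equivFun.symm
  have he (x : L43 K) : e x = ∑ i, x i • v i := by
    rw [← coe_basisOfLinearIndependentOfCardEqFinrank hv (by simp [hdim])]
    exact b.equivFun_symm_apply x
  refine ⟨(LieEquiv.ofLinearEquiv e fun x y => ?_).symm⟩
  rw [he, he, he, L43.lie_eq_br]
  simp only [L43.br, Fin.sum_univ_four, Matrix.cons_val_zero, Matrix.cons_val_one,
    Matrix.cons_val, lie_add, add_lie, lie_smul, smul_lie, lie_self, h01, h02, h12, h3,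
    lie_eq_neg_of_lie_eq (h3 _), lie_eq_neg_of_lie_eq h01, lie_eq_neg_of_lie_eq h02,
    lie_eq_neg_of_lie_eq h12, zero_smul, smul_zero]
  module

end Recognition

section Relations

variable {K L : Type*} [Field K] [LieRing L] [LieAlgebra K L]

lemma exists_lie_eq_zero_notMem_span [FiniteDimensional K L] (hdim : 3 < finrank K L) {p q : L}
    (hbr : ∀ a b : L, ⁅a, b⁆ ∈ K ∙ ⁅p, q⁆) :
    ∃ w : L, ⁅p, w⁆ = 0 ∧ ⁅q, w⁆ = 0 ∧ w ∉ span K (Set.range ![p, q, ⁅p, q⁆]) := by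
  obtain ⟨w₀, -, hw₀⟩ := SetLike.exists_of_lt
    (show span K (Set.range ![p, q, ⁅p, q⁆]) < ⊤ from lt_top_iff_ne_top.2 fun h => by
      have := finrank_range_le_card (R := K) ![p, q, ⁅p, q⁆]
      rw [Set.finrank, h, finrank_top, Fintype.card_fin] at this
      omega)
  obtain ⟨α, hα⟩ := mem_span_singleton.1 (hbr p w₀)
  obtain ⟨β, hβ⟩ := mem_span_singleton.1 (hbr q w₀)
  refine ⟨w₀ + β • p - α • q, ?_, ?_, fun h => hw₀ ?_⟩
  · rw [lie_sub, lie_add, lie_smul, lie_smul, lie_self, ← hα]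
    module
  · rw [lie_sub, lie_add, lie_smul, lie_smul, lie_self, ← hβ, ← lie_skew q p]
    module
  · have hp : p ∈ span K (Set.range ![p, q, ⁅p, q⁆]) := subset_span ⟨0, rfl⟩
    have hq : q ∈ span K (Set.range ![p, q, ⁅p, q⁆]) := subset_span ⟨1, rfl⟩
    convert add_mem (sub_mem h (smul_mem _ β hp)) (smul_mem _ α hq) using 1
    abel

lemma linearIndependent_of_heis_relations {p q w : L} (hz : ⁅p, q⁆ ≠ 0)
    (hcen : ∀ a : L, ⁅a, ⁅p, q⁆⁆ = 0) (hpw : ⁅p, w⁆ = 0) (hqw : ⁅q, w⁆ = 0)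
    (hw : w ∉ span K (Set.range ![p, q, ⁅p, q⁆])) :
    LinearIndependent K ![p, q, ⁅p, q⁆, w] := by
  generalize hpq : ⁅p, q⁆ = z at *
  have hqp : ⁅q, p⁆ = -z := by rw [← lie_skew, hpq]
  have hzw : LinearIndependent K ![z, w] := by
    refine LinearIndependent.pair_symm_iff.1 (linearIndependent_finCons.2
      ⟨linearIndependent_unique_iff.2 (by simpa using hz), fun h => hw (span_mono ?_ h)⟩)
    simp
  have hq : q ∉ span K (Set.range ![z, w]) :=
    notMem_span_range_of_map_eq_zero (toEnd K L L p)
      (by simp [Fin.forall_fin_succ, hcen, hpw]) (by simpa [hpq] using hz)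
  have hp : p ∉ span K (Set.range ![q, z, w]) :=
    notMem_span_range_of_map_eq_zero (toEnd K L L q)
      (by simp [Fin.forall_fin_succ, hcen, hqw]) (by simpa [hqp] using hz)
  exact linearIndependent_finCons.2 ⟨linearIndependent_finCons.2 ⟨hzw, hq⟩, hp⟩

lemma linearIndependent_of_l43_relations {x y : L} (hw : ⁅x, ⁅x, y⁆⁆ ≠ 0)
    (hyz : ⁅y, ⁅x, y⁆⁆ = 0) (hcen : ∀ a : L, ⁅a, ⁅x, ⁅x, y⁆⁆⁆ = 0) :
    LinearIndependent K ![x, y, ⁅x, y⁆, ⁅x, ⁅x, y⁆⁆] := by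
  generalize hxy : ⁅x, y⁆ = z at *
  generalize hxz : ⁅x, z⁆ = w at *
  have hzy : ⁅z, y⁆ = 0 := by rw [← lie_skew, hyz, neg_zero]
  have hzx : ⁅z, x⁆ = -w := by rw [← lie_skew, hxz]
  have hz : z ∉ span K (Set.range ![w]) :=
    notMem_span_range_of_map_eq_zero (toEnd K L L x) (by simp [hcen]) (by simpa [hxz] using hw)
  have hy : y ∉ span K (Set.range ![z, w]) :=
    notMem_span_range_of_map_eq_zero (toEnd K L L x ∘ₗ toEnd K L L x)
      (by simp [Fin.forall_fin_succ, hxz, hcen]) (by simpa [hxy, hxz] using hw)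
  have hx : x ∉ span K (Set.range ![y, z, w]) :=
    notMem_span_range_of_map_eq_zero (toEnd K L L z)
      (by simp [Fin.forall_fin_succ, hzy, hcen]) (by simpa [hzx] using hw)
  exact linearIndependent_finCons.2 ⟨linearIndependent_finCons.2
    ⟨linearIndependent_finCons.2 ⟨linearIndependent_unique_iff.2 (by simpa using hw), hz⟩, hy⟩, hx⟩

end Relations

section Classification

variable {K L : Type*} [Field K] [LieRing L] [LieAlgebra K L] [LieRing.IsNilpotent L]

theorem nonempty_lieEquiv_heisProd_of_finrank_lowerCentralSeries_one_eq_one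
    (hdim : finrank K L = 4) (h1 : finrank K (lowerCentralSeries K L L 1).toSubmodule = 1) :
    Nonempty (L ≃ₗ⁅K⁆ Heis K 1 × AbelianLie K 1) := by
  have : FiniteDimensional K L := .of_finrank_pos (by omega)
  have h2 : lowerCentralSeries K L L 2 = ⊥ := lowerCentralSeries_succ_eq_bot_of_finrank_le_one h1.le
  obtain ⟨p, q, hz⟩ : ∃ p q : L, ⁅p, q⁆ ≠ 0 := by
    by_contra! h
    have : (lowerCentralSeries K L L 1).toSubmodule = ⊥ :=
      eq_bot_iff.2 (lowerCentralSeries_succ_le_iff.2 fun x m _ => by simp [h])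
    rw [this, finrank_bot] at h1
    omega
  have hD1 : (lowerCentralSeries K L L 1).toSubmodule = K ∙ ⁅p, q⁆ :=
    eq_span_singleton_of_mem_of_finrank_eq_one h1 (lie_mem_lowerCentralSeries_one p q) hz
  have hbr (a b : L) : ⁅a, b⁆ ∈ K ∙ ⁅p, q⁆ := by
    rw [← hD1]
    exact lie_mem_lowerCentralSeries_one a b
  have hcen (a : L) : ⁅a, ⁅p, q⁆⁆ = 0 := by
    have : ⁅a, ⁅p, q⁆⁆ ∈ lowerCentralSeries K L L 2 :=
      lie_mem_lowerCentralSeries_succ a (lie_mem_lowerCentralSeries_one p q)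
    rwa [h2, LieSubmodule.mem_bot] at this
  obtain ⟨w, hpw, hqw, hw⟩ := exists_lie_eq_zero_notMem_span (by omega) hbr
  exact nonempty_lieEquiv_heisProd_of_linearIndependent hdim
    (linearIndependent_of_heis_relations hz hcen hpw hqw hw) rfl hcen hpw hqw

theorem nonempty_lieEquiv_l43_of_finrank_lowerCentralSeries_one_eq_two
    (hdim : finrank K L = 4) (h1 : finrank K (lowerCentralSeries K L L 1).toSubmodule = 2) :
    Nonempty (L ≃ₗ⁅K⁆ L43 K) := by
  have : FiniteDimensional K L := .of_finrank_pos (by omega)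
  have h2 : finrank K (lowerCentralSeries K L L 2).toSubmodule = 1 := by
    have hne : lowerCentralSeries K L L 1 ≠ ⊥ :=
      mt (LieSubmodule.toSubmodule_eq_bot _).2 (by rw [← finrank_eq_zero]; omega)
    have := finrank_lowerCentralSeries_two_add_one (by omega) hne
    omega
  have h3 : lowerCentralSeries K L L 3 = ⊥ := lowerCentralSeries_succ_eq_bot_of_finrank_le_one h2.le
  have hcen (a : L) {d : L} (hd : d ∈ lowerCentralSeries K L L 2) : ⁅a, d⁆ = 0 := by
    have : ⁅a, d⁆ ∈ lowerCentralSeries K L L 3 := lie_mem_lowerCentralSeries_succ a hd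
    rwa [h3, LieSubmodule.mem_bot] at this
  have hne : lowerCentralSeries K L L 2 ≠ ⊥ :=
    mt (LieSubmodule.toSubmodule_eq_bot _).2 (by rw [← finrank_eq_zero]; omega)
  obtain ⟨x, y, hw⟩ := exists_lie_lie_ne_zero (by omega) hne h3
  have hmem (a : L) : ⁅a, ⁅x, y⁆⁆ ∈ lowerCentralSeries K L L 2 :=
    lie_mem_lowerCentralSeries_succ a (lie_mem_lowerCentralSeries_one x y)
  have hD2 : (lowerCentralSeries K L L 2).toSubmodule = K ∙ ⁅x, ⁅x, y⁆⁆ :=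
    eq_span_singleton_of_mem_of_finrank_eq_one h2 (hmem x) hw
  obtain ⟨c, hc⟩ : ∃ c : K, c • ⁅x, ⁅x, y⁆⁆ = ⁅y, ⁅x, y⁆⁆ := by
    rw [← mem_span_singleton, ← hD2]
    exact hmem y
  have hxy : ⁅x, y - c • x⁆ = ⁅x, y⁆ := by rw [lie_sub, lie_smul, lie_self, smul_zero, sub_zero]
  have hyz : ⁅y - c • x, ⁅x, y - c • x⁆⁆ = 0 := by rw [hxy, sub_lie, smul_lie, hc, sub_self]
  have hcen' (a : L) : ⁅a, ⁅x, ⁅x, y - c • x⁆⁆⁆ = 0 := by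
    rw [hxy]
    exact hcen a (hmem x)
  exact nonempty_lieEquiv_l43_of_linearIndependent hdim
    (linearIndependent_of_l43_relations (hxy ▸ hw) hyz hcen') rfl rfl hyz hcen'

end Classification

theorem nilpotent_lieAlgebra_dim4_classification_general {K : Type*} [Field K]
    {L : Type*} [LieRing L] [LieAlgebra K L]
    [LieRing.IsNilpotent L] (hdim : Module.finrank K L = 4) :
    Nonempty (L ≃ₗ⁅K⁆ AbelianLie K 4) ∨
    Nonempty (L ≃ₗ⁅K⁆ (Heis K 1 × AbelianLie K 1)) ∨
    Nonempty (L ≃ₗ⁅K⁆ L43 K) := by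
  have : FiniteDimensional K L := .of_finrank_pos (by omega)
  have hle : finrank K (lowerCentralSeries K L L 1).toSubmodule ≤ 2 := by
    by_cases h : lowerCentralSeries K L L 1 = ⊥
    · rw [(LieSubmodule.toSubmodule_eq_bot _).2 h, finrank_bot]
      omega
    · have := finrank_lowerCentralSeries_one_add_two_le h
      omega
  interval_cases h1 : finrank K (lowerCentralSeries K L L 1).toSubmodule
  · have : IsLieAbelian L := (trivial_iff_lower_central_eq_bot K L L).2
      ((LieSubmodule.toSubmodule_eq_bot _).1 (finrank_eq_zero.1 h1))
    exact Or.inl (nonempty_lieEquiv_abelianLie hdim)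
  · exact Or.inr <| Or.inl <|
      nonempty_lieEquiv_heisProd_of_finrank_lowerCentralSeries_one_eq_one hdim h1
  · exact Or.inr <| Or.inr <|
      nonempty_lieEquiv_l43_of_finrank_lowerCentralSeries_one_eq_two hdim h1

/-- (de Graaf's classification in dimension 4.) Over a field `K` of
characteristic `≠ 2`, every nilpotent Lie algebra of dimension 4 is isomorphic to one
of: the abelian Lie algebra `K⁴`; the direct product `h(1) × K` of the Heisenberg
algebra with the 1-dimensional abelian Lie algebra; or the Lie algebra `l_{4,3}`. -/
theorem nilpotent_lieAlgebra_dim4_classification {K : Type*} [Field K]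
    (hchar : ringChar K ≠ 2) {L : Type*} [LieRing L] [LieAlgebra K L]
    [LieRing.IsNilpotent L] (hdim : Module.finrank K L = 4) :
    Nonempty (L ≃ₗ⁅K⁆ AbelianLie K 4) ∨
    Nonempty (L ≃ₗ⁅K⁆ (Heis K 1 × AbelianLie K 1)) ∨
    Nonempty (L ≃ₗ⁅K⁆ L43 K) :=
  nilpotent_lieAlgebra_dim4_classification_general hdim
end
end

section
/- Let α ∈ ℝ and β > 0, and define the linear operators on the Schwartz space S(ℝ): a f = (1/√(2β))·(f' + β·x·f + iαβ·f), b f = (1/√(2β))·(−f' + β·x·f + iαβ·f), a* f = (1/√(2β))·(−f' + β·x·f − iαβ·f), b* f = (1/√(2β))·(f' + β·x·f − iαβ·f). Then these operators map S(ℝ) into itself and for every f ∈ S(ℝ): a(b f) − b(a f) = f; b*(a* f) − a*(b* f) = f; a(a* f) − a*(a f) = f; b*(b f) − b(b* f) = f; a(b* f) − b*(a f) = 0; and b(a* f) − a*(b f) = 0. In particular the operators a, b, b*, a*, id satisfy exactly the same commutation relations as the generators v_1, v_2, v_3, v_4, v of the Lie algebra a_sh. -/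
noncomputable section

open SchwartzMap

/-- Multiplication by the variable `x`, as an operator on the Schwartz space
`𝓢(ℝ, ℂ)`: it sends `f` to the function `x ↦ f x * x`. -/
def mulXOp : 𝓢(ℝ, ℂ) →L[ℝ] 𝓢(ℝ, ℂ) :=
  SchwartzMap.bilinLeftCLM (ContinuousLinearMap.mul ℝ ℂ)
    Complex.ofRealCLM.hasTemperateGrowth

@[simp] lemma mulXOp_apply (f : 𝓢(ℝ, ℂ)) (x : ℝ) : mulXOp f x = f x * x := rfl

/-- The annihilation operator `c`, with `(c f) x = (x * f x + deriv f x)/√2`. -/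
def cOp (f : 𝓢(ℝ, ℂ)) : 𝓢(ℝ, ℂ) :=
  ((Real.sqrt 2 : ℂ))⁻¹ • (mulXOp f + SchwartzMap.derivCLM ℂ ℂ f)

/-- The creation operator `c†`, with `(c† f) x = (x * f x - deriv f x)/√2`. -/
def cdOp (f : 𝓢(ℝ, ℂ)) : 𝓢(ℝ, ℂ) :=
  ((Real.sqrt 2 : ℂ))⁻¹ • (mulXOp f - SchwartzMap.derivCLM ℂ ℂ f)

lemma cOp_apply (f : 𝓢(ℝ, ℂ)) (x : ℝ) :
    cOp f x = ((x : ℂ) * f x + deriv f x) / (Real.sqrt 2 : ℂ) := by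
  rw [cOp, SchwartzMap.smul_apply, SchwartzMap.add_apply, mulXOp_apply,
    SchwartzMap.derivCLM_apply, smul_eq_mul, div_eq_inv_mul]
  ring

lemma cdOp_apply (f : 𝓢(ℝ, ℂ)) (x : ℝ) :
    cdOp f x = ((x : ℂ) * f x - deriv f x) / (Real.sqrt 2 : ℂ) := by
  rw [cdOp, SchwartzMap.smul_apply, SchwartzMap.sub_apply, mulXOp_apply,
    SchwartzMap.derivCLM_apply, smul_eq_mul, div_eq_inv_mul]
  ring

/-- The Bender–Jones operator `a f = (1/√(2β)) (f' + β·x·f + iαβ·f)`. -/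
def aBJ (α β : ℝ) (f : 𝓢(ℝ, ℂ)) : 𝓢(ℝ, ℂ) :=
  ((Real.sqrt (2 * β) : ℂ))⁻¹ •
    (SchwartzMap.derivCLM ℂ ℂ f + (β : ℂ) • mulXOp f + (Complex.I * α * β) • f)

/-- The Bender–Jones operator `b f = (1/√(2β)) (-f' + β·x·f + iαβ·f)`. -/
def bBJ (α β : ℝ) (f : 𝓢(ℝ, ℂ)) : 𝓢(ℝ, ℂ) :=
  ((Real.sqrt (2 * β) : ℂ))⁻¹ •
    (-SchwartzMap.derivCLM ℂ ℂ f + (β : ℂ) • mulXOp f + (Complex.I * α * β) • f)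

/-- The Bender–Jones operator `a† f = (1/√(2β)) (-f' + β·x·f - iαβ·f)`. -/
def aBJStar (α β : ℝ) (f : 𝓢(ℝ, ℂ)) : 𝓢(ℝ, ℂ) :=
  ((Real.sqrt (2 * β) : ℂ))⁻¹ •
    (-SchwartzMap.derivCLM ℂ ℂ f + (β : ℂ) • mulXOp f - (Complex.I * α * β) • f)

/-- The Bender–Jones operator `b† f = (1/√(2β)) (f' + β·x·f - iαβ·f)`. -/
def bBJStar (α β : ℝ) (f : 𝓢(ℝ, ℂ)) : 𝓢(ℝ, ℂ) :=
  ((Real.sqrt (2 * β) : ℂ))⁻¹ •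
    (SchwartzMap.derivCLM ℂ ℂ f + (β : ℂ) • mulXOp f - (Complex.I * α * β) • f)


/-!
Each of `a, b, a†, b†` has the form `s (ε d/dx + β x + c)` with `s = (2β)^(-1/2)`, `ε = ±1`
and `c = ±iαβ`. In the commutator of two such operators only the cross terms between
`d/dx` and `x` survive, and `[d/dx, x] = 1`, so the commutator is `(ε₁ - ε₂) β s²`:
`1` when the signs of `d/dx` differ and `0` when they agree.
-/

lemma mulXOp_smul (c : ℂ) (f : 𝓢(ℝ, ℂ)) : mulXOp (c • f) = c • mulXOp f := by
  ext x
  simp [mul_assoc]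

lemma derivCLM_mulXOp (f : 𝓢(ℝ, ℂ)) :
    derivCLM ℂ ℂ (mulXOp f) = f + mulXOp (derivCLM ℂ ℂ f) := by
  ext x
  have hX : HasDerivAt (fun y : ℝ => (y : ℂ)) 1 x := (hasDerivAt_id x).ofReal_comp
  have hXf : HasDerivAt (fun y : ℝ => f y * y) (deriv f x * x + f x * 1) x :=
    f.differentiableAt.hasDerivAt.mul hX
  rw [derivCLM_apply, add_apply, mulXOp_apply, derivCLM_apply]
  change deriv (fun y : ℝ => f y * y) x = _
  rw [hXf.deriv]
  ring

def firstOrderOp (s ε b c : ℂ) (f : 𝓢(ℝ, ℂ)) : 𝓢(ℝ, ℂ) :=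
  s • (ε • derivCLM ℂ ℂ f + b • mulXOp f + c • f)

lemma firstOrderOp_commutator (s b ε₁ ε₂ c₁ c₂ : ℂ) (f : 𝓢(ℝ, ℂ)) :
    firstOrderOp s ε₁ b c₁ (firstOrderOp s ε₂ b c₂ f) -
        firstOrderOp s ε₂ b c₂ (firstOrderOp s ε₁ b c₁ f) =
      ((ε₁ - ε₂) * b * s ^ 2) • f := by
  simp only [firstOrderOp, map_add, map_smul, mulXOp_smul, smul_add, smul_smul, derivCLM_mulXOp]
  module

section BenderJones

variable (α β : ℝ) (f : 𝓢(ℝ, ℂ))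

lemma aBJ_eq_firstOrderOp :
    aBJ α β f = firstOrderOp (√(2 * β) : ℂ)⁻¹ 1 β (Complex.I * α * β) f := by
  rw [aBJ, firstOrderOp, one_smul]

lemma bBJ_eq_firstOrderOp :
    bBJ α β f = firstOrderOp (√(2 * β) : ℂ)⁻¹ (-1) β (Complex.I * α * β) f := by
  rw [bBJ, firstOrderOp, neg_one_smul]

lemma aBJStar_eq_firstOrderOp :
    aBJStar α β f = firstOrderOp (√(2 * β) : ℂ)⁻¹ (-1) β (-(Complex.I * α * β)) f := by
  rw [aBJStar, firstOrderOp, neg_one_smul, neg_smul, sub_eq_add_neg]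

lemma bBJStar_eq_firstOrderOp :
    bBJStar α β f = firstOrderOp (√(2 * β) : ℂ)⁻¹ 1 β (-(Complex.I * α * β)) f := by
  rw [bBJStar, firstOrderOp, one_smul, neg_smul, sub_eq_add_neg]

end BenderJones

lemma ofReal_mul_inv_sqrt_sq {r : ℝ} (hr : 0 < r) : (r : ℂ) * ((√r : ℂ)⁻¹) ^ 2 = 1 := by
  rw [inv_pow, ← Complex.ofReal_pow, Real.sq_sqrt hr.le, mul_inv_cancel₀ (by exact_mod_cast hr.ne')]

/-- For `α ∈ ℝ` and `β > 0`, the operators `a`, `b`, `a†`, `b†`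
of the (one-dimensional) Bender–Jones model map the Schwartz space into itself and
satisfy the same commutation relations as the generators `v₁, v₂, v₃, v₄, v` of the
Lie algebra `a_sh`: `[a,b] = [b†,a†] = [a,a†] = [b†,b] = 1`, `[a,b†] = [b,a†] = 0`. -/
theorem bender_jones_commutation_relations (α β : ℝ) (hβ : 0 < β) :
    (∀ f : 𝓢(ℝ, ℂ), aBJ α β (bBJ α β f) - bBJ α β (aBJ α β f) = f) ∧
    (∀ f : 𝓢(ℝ, ℂ), bBJStar α β (aBJStar α β f) - aBJStar α β (bBJStar α β f) = f) ∧
    (∀ f : 𝓢(ℝ, ℂ), aBJ α β (aBJStar α β f) - aBJStar α β (aBJ α β f) = f) ∧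
    (∀ f : 𝓢(ℝ, ℂ), bBJStar α β (bBJ α β f) - bBJ α β (bBJStar α β f) = f) ∧
    (∀ f : 𝓢(ℝ, ℂ), aBJ α β (bBJStar α β f) - bBJStar α β (aBJ α β f) = 0) ∧
    (∀ f : 𝓢(ℝ, ℂ), bBJ α β (aBJStar α β f) - aBJStar α β (bBJ α β f) = 0) := by
  have hunit : ((1 : ℂ) - -1) * β * ((√(2 * β) : ℂ)⁻¹) ^ 2 = 1 := by
    have h := ofReal_mul_inv_sqrt_sq (by positivity : 0 < 2 * β)
    push_cast at h
    linear_combination h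
  refine ⟨fun f => ?_, fun f => ?_, fun f => ?_, fun f => ?_, fun f => ?_, fun f => ?_⟩ <;>
    simp only [aBJ_eq_firstOrderOp, bBJ_eq_firstOrderOp, aBJStar_eq_firstOrderOp,
      bBJStar_eq_firstOrderOp, firstOrderOp_commutator, hunit, one_smul, sub_self, zero_mul,
      zero_smul]
end
end

section
/- Let θ ∈ ℝ and define on the Schwartz space S(ℝ) the operators a = cos(θ)·c + i·sin(θ)·c†, b = cos(θ)·c† + i·sin(θ)·c, a* = cos(θ)·c† − i·sin(θ)·c, b* = cos(θ)·c − i·sin(θ)·c†. Then for every f ∈ S(ℝ): a(b f) − b(a f) = f; b*(a* f) − a*(b* f) = f; a(a* f) − a*(a f) = cos(2θ)·f; b*(b f) − b(b* f) = cos(2θ)·f; a(b* f) − b*(a f) = −i·sin(2θ)·f; and a*(b f) − b(a* f) = −i·sin(2θ)·f. (These are the commutation relations of the Swanson model.) -/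
/-! With `X` the position operator and `D = d/dx`, we have `c = (X + D)/√2` and
`c† = (X - D)/√2`, and the Leibniz rule gives `[X, D] = -1`, hence `[c, c†] = 1`.
Each of `a`, `b`, `a*`, `b*` is a combination `α c + β c†`, and
`[α c + β c†, γ c + δ c†] = (α δ - β γ) [c, c†]`; so every relation reduces to evaluating
a 2×2 determinant in `cos θ` and `i sin θ`. -/

noncomputable section

open SchwartzMap

/-- The Swanson-model operator `a = cos θ · c + i sin θ · c†`. -/
def aSw (θ : ℝ) (f : 𝓢(ℝ, ℂ)) : 𝓢(ℝ, ℂ) :=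
  (Real.cos θ : ℂ) • cOp f + (Complex.I * (Real.sin θ : ℂ)) • cdOp f

/-- The Swanson-model operator `b = cos θ · c† + i sin θ · c`. -/
def bSw (θ : ℝ) (f : 𝓢(ℝ, ℂ)) : 𝓢(ℝ, ℂ) :=
  (Real.cos θ : ℂ) • cdOp f + (Complex.I * (Real.sin θ : ℂ)) • cOp f

/-- The Swanson-model operator `a† = cos θ · c† - i sin θ · c`. -/
def aSwStar (θ : ℝ) (f : 𝓢(ℝ, ℂ)) : 𝓢(ℝ, ℂ) :=
  (Real.cos θ : ℂ) • cdOp f - (Complex.I * (Real.sin θ : ℂ)) • cOp f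

/-- The Swanson-model operator `b† = cos θ · c - i sin θ · c†`. -/
def bSwStar (θ : ℝ) (f : 𝓢(ℝ, ℂ)) : 𝓢(ℝ, ℂ) :=
  (Real.cos θ : ℂ) • cOp f - (Complex.I * (Real.sin θ : ℂ)) • cdOp f

theorem lie_smul_add_smul {R A : Type*} [CommRing R] [Ring A] [Algebra R A]
    (x y : A) (α β γ δ : R) :
    ⁅α • x + β • y, γ • x + δ • y⁆ = (α * δ - β * γ) • ⁅x, y⁆ := by
  simp only [Ring.lie_def, add_mul, mul_add, smul_mul_smul_comm]
  module

/-- A `ℂ`-linear version of `mulXOp`, which is only `ℝ`-linear. -/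
def positionOp : Module.End ℂ 𝓢(ℝ, ℂ) :=
  (smulLeftCLM ℂ (fun x : ℝ => (x : ℂ))).toLinearMap

def derivOp : Module.End ℂ 𝓢(ℝ, ℂ) := (derivCLM ℂ ℂ).toLinearMap

theorem positionOp_apply (f : 𝓢(ℝ, ℂ)) (x : ℝ) : positionOp f x = x * f x :=
  smulLeftCLM_apply_apply (by fun_prop) f x

theorem derivOp_apply (f : 𝓢(ℝ, ℂ)) (x : ℝ) : derivOp f x = deriv f x := rfl

theorem lie_positionOp_derivOp : ⁅positionOp, derivOp⁆ = -1 := by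
  ext f x
  have hmul : HasDerivAt (positionOp f) ((1 : ℝ) * f x + x * deriv f x) x := by
    rw [show ⇑(positionOp f) = fun y : ℝ => (y : ℂ) * f y from funext (positionOp_apply f)]
    exact (hasDerivAt_id' x).ofReal_comp.mul (f.hasDerivAt x)
  simp only [Ring.lie_def, LinearMap.sub_apply, Module.End.mul_apply, LinearMap.neg_apply,
    Module.End.one_apply, sub_apply, neg_apply, derivOp_apply, positionOp_apply, hmul.deriv,
    Complex.ofReal_one]
  ring

def annihilationOp : Module.End ℂ 𝓢(ℝ, ℂ) :=
  (Real.sqrt 2 : ℂ)⁻¹ • positionOp + (Real.sqrt 2 : ℂ)⁻¹ • derivOp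

def creationOp : Module.End ℂ 𝓢(ℝ, ℂ) :=
  (Real.sqrt 2 : ℂ)⁻¹ • positionOp + (-(Real.sqrt 2 : ℂ)⁻¹) • derivOp

theorem annihilationOp_apply (f : 𝓢(ℝ, ℂ)) : annihilationOp f = cOp f := by
  ext x
  simp [annihilationOp, cOp, positionOp_apply, derivOp_apply, mul_comm]

theorem creationOp_apply (f : 𝓢(ℝ, ℂ)) : creationOp f = cdOp f := by
  ext x
  simp [creationOp, cdOp, positionOp_apply, derivOp_apply, mul_comm, sub_eq_add_neg]

theorem lie_annihilationOp_creationOp : ⁅annihilationOp, creationOp⁆ = 1 := by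
  have hsqrt : ((Real.sqrt 2 : ℂ)⁻¹) ^ 2 = 2⁻¹ := by
    rw [inv_pow, ← Complex.ofReal_pow, Real.sq_sqrt zero_le_two, Complex.ofReal_ofNat]
  rw [annihilationOp, creationOp, lie_smul_add_smul, lie_positionOp_derivOp, smul_neg,
    ← neg_smul]
  convert one_smul ℂ (1 : Module.End ℂ 𝓢(ℝ, ℂ)) using 2
  linear_combination 2 * hsqrt

def ladderCombination (α β : ℂ) : Module.End ℂ 𝓢(ℝ, ℂ) :=
  α • annihilationOp + β • creationOp

theorem ladderCombination_apply (α β : ℂ) (f : 𝓢(ℝ, ℂ)) :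
    ladderCombination α β f = α • cOp f + β • cdOp f := by
  simp [ladderCombination, annihilationOp_apply, creationOp_apply]

theorem lie_ladderCombination (α β γ δ : ℂ) :
    ⁅ladderCombination α β, ladderCombination γ δ⁆ = (α * δ - β * γ) • 1 := by
  rw [ladderCombination, ladderCombination, lie_smul_add_smul,
    lie_annihilationOp_creationOp]

theorem ladderCombination_commutator_apply (α β γ δ : ℂ) (f : 𝓢(ℝ, ℂ)) :
    ladderCombination α β (ladderCombination γ δ f) -
      ladderCombination γ δ (ladderCombination α β f) = (α * δ - β * γ) • f := by
  simpa only [Ring.lie_def, LinearMap.sub_apply, Module.End.mul_apply, LinearMap.smul_apply,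
    Module.End.one_apply] using LinearMap.congr_fun (lie_ladderCombination α β γ δ) f

theorem aSw_eq_ladderCombination (θ : ℝ) (f : 𝓢(ℝ, ℂ)) :
    aSw θ f = ladderCombination (Real.cos θ) (Complex.I * Real.sin θ) f := by
  rw [aSw, ladderCombination_apply]

theorem bSw_eq_ladderCombination (θ : ℝ) (f : 𝓢(ℝ, ℂ)) :
    bSw θ f = ladderCombination (Complex.I * Real.sin θ) (Real.cos θ) f := by
  rw [bSw, ladderCombination_apply, add_comm]

theorem aSwStar_eq_ladderCombination (θ : ℝ) (f : 𝓢(ℝ, ℂ)) :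
    aSwStar θ f = ladderCombination (-(Complex.I * Real.sin θ)) (Real.cos θ) f := by
  rw [aSwStar, ladderCombination_apply, neg_smul, sub_eq_neg_add]

theorem bSwStar_eq_ladderCombination (θ : ℝ) (f : 𝓢(ℝ, ℂ)) :
    bSwStar θ f = ladderCombination (Real.cos θ) (-(Complex.I * Real.sin θ)) f := by
  rw [bSwStar, ladderCombination_apply, neg_smul, sub_eq_add_neg]

/-- The Swanson-model operators `a`, `b`, `a†`, `b†` on Schwartz
space satisfy the commutation relations `[a,b] = [b†,a†] = 1`,
`[a,a†] = [b†,b] = cos(2θ)`, and `[a,b†] = [a†,b] = -i sin(2θ)`. -/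
theorem swanson_commutation_relations (θ : ℝ) :
    (∀ f : 𝓢(ℝ, ℂ), aSw θ (bSw θ f) - bSw θ (aSw θ f) = f) ∧
    (∀ f : 𝓢(ℝ, ℂ), bSwStar θ (aSwStar θ f) - aSwStar θ (bSwStar θ f) = f) ∧
    (∀ f : 𝓢(ℝ, ℂ), aSw θ (aSwStar θ f) - aSwStar θ (aSw θ f) =
      (Real.cos (2 * θ) : ℂ) • f) ∧
    (∀ f : 𝓢(ℝ, ℂ), bSwStar θ (bSw θ f) - bSw θ (bSwStar θ f) =
      (Real.cos (2 * θ) : ℂ) • f) ∧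
    (∀ f : 𝓢(ℝ, ℂ), aSw θ (bSwStar θ f) - bSwStar θ (aSw θ f) =
      (-Complex.I * (Real.sin (2 * θ) : ℂ)) • f) ∧
    (∀ f : 𝓢(ℝ, ℂ), aSwStar θ (bSw θ f) - bSw θ (aSwStar θ f) =
      (-Complex.I * (Real.sin (2 * θ) : ℂ)) • f) := by
  have hcs := Complex.cos_sq_add_sin_sq (θ : ℂ)
  have hcos2 := Complex.cos_two_mul (θ : ℂ)
  have hsin2 := Complex.sin_two_mul (θ : ℂ)
  have hI := Complex.I_sq
  simp only [aSw_eq_ladderCombination, bSw_eq_ladderCombination, aSwStar_eq_ladderCombination,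
    bSwStar_eq_ladderCombination, ladderCombination_commutator_apply]
  push_cast
  refine ⟨fun f => ?_, fun f => ?_, fun f => ?_, fun f => ?_, fun f => ?_, fun f => ?_⟩
  · convert one_smul ℂ f using 2; linear_combination hcs - Complex.sin θ ^ 2 * hI
  · convert one_smul ℂ f using 2; linear_combination hcs - Complex.sin θ ^ 2 * hI
  · congr 1; linear_combination Complex.sin θ ^ 2 * hI - hcos2 - hcs
  · congr 1; linear_combination Complex.sin θ ^ 2 * hI - hcos2 - hcs
  · congr 1; linear_combination Complex.I * hsin2
  · congr 1; linear_combination Complex.I * hsin2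
end
end

section
/- In the pseudo-bosonic setting, the vectors φ_n = (1/√(n!))·bⁿφ_0 and Ψ_m = (1/√(m!))·(a′)ᵐΨ_0 form biorthogonal families: ⟨φ_n, Ψ_m⟩ = 1 if n = m and ⟨φ_n, Ψ_m⟩ = 0 if n ≠ m, for all n, m ≥ 0. -/
/-!
Moving one `b` across the pairing turns it into `b'`, and the relation `b' a' - a' b' = 1` with
`b' Ψ₀ = 0` makes `b'` a lowering operator: `b' (a')ᵐ⁺¹ Ψ₀ = (m + 1) (a')ᵐ Ψ₀`. Iterating gives
`⟨bⁿ φ₀, (a')ᵐ Ψ₀⟩ = δₙₘ n! ⟨φ₀, Ψ₀⟩`, the mismatched case ending in `a φ₀ = 0` or `b' Ψ₀ = 0`,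
and the normalisations `1/√n!` absorb the factorial.
-/

namespace Module.End

variable {R M : Type*} [Semiring R] [AddCommGroup M] [Module R M]

theorem apply_pow_succ_apply_of_sub_eq_self {A B : Module.End R M}
    (hAB : ∀ f, A (B f) - B (A f) = f) {v : M} (hv : A v = 0) (n : ℕ) :
    A ((B ^ (n + 1)) v) = (n + 1) • (B ^ n) v := by
  induction n with
  | zero => simpa [hv] using hAB v
  | succ n ih =>
    calc A ((B ^ (n + 2)) v)
        = B (A ((B ^ (n + 1)) v)) + (B ^ (n + 1)) v := by
          rw [pow_succ', mul_apply]
          exact sub_eq_iff_eq_add'.mp (hAB _)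
      _ = (n + 1 + 1) • (B ^ (n + 1)) v := by
          rw [ih, map_nsmul, ← mul_apply, ← pow_succ', ← succ_nsmul]

end Module.End

section Ladder

open Module.End InnerProductSpace

variable {𝕜 E : Type*} [RCLike 𝕜] [NormedAddCommGroup E] [InnerProductSpace 𝕜 E]

theorem inner_pow_apply_pow_apply {A B A' B' : Module.End 𝕜 E}
    (hA : ∀ f g, ⟪A f, g⟫_𝕜 = ⟪f, A' g⟫_𝕜) (hB : ∀ f g, ⟪B f, g⟫_𝕜 = ⟪f, B' g⟫_𝕜)
    (hB'A' : ∀ f, B' (A' f) - A' (B' f) = f) {φ₀ Ψ₀ : E} (hφ₀ : A φ₀ = 0) (hΨ₀ : B' Ψ₀ = 0)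
    (n m : ℕ) :
    ⟪(B ^ n) φ₀, (A' ^ m) Ψ₀⟫_𝕜 = if n = m then (n.factorial : 𝕜) * ⟪φ₀, Ψ₀⟫_𝕜 else 0 := by
  induction n generalizing m with
  | zero =>
    cases m with
    | zero => simp
    | succ m => rw [pow_succ', mul_apply, pow_zero, one_apply, ← hA, hφ₀]; simp
  | succ n ih =>
    cases m with
    | zero => rw [pow_succ', mul_apply, hB, pow_zero, one_apply, hΨ₀]; simp
    | succ m =>
      calc ⟪(B ^ (n + 1)) φ₀, (A' ^ (m + 1)) Ψ₀⟫_𝕜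
          = (m + 1) * ⟪(B ^ n) φ₀, (A' ^ m) Ψ₀⟫_𝕜 := by
            rw [pow_succ', mul_apply, hB, apply_pow_succ_apply_of_sub_eq_self hB'A' hΨ₀,
              ← Nat.cast_smul_eq_nsmul 𝕜, inner_smul_right]
            push_cast; rfl
        _ = if n + 1 = m + 1 then ((n + 1).factorial : 𝕜) * ⟪φ₀, Ψ₀⟫_𝕜 else 0 := by
            by_cases h : n = m
            · subst h; simp [ih, Nat.factorial_succ]; ring
            · simp [ih, h]

end Ladder

theorem pseudoboson_biorthogonal_general
    {H : Type*} [NormedAddCommGroup H] [InnerProductSpace ℂ H]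
    (D : Submodule ℂ H) (a b a' b' : Module.End ℂ D)
    (hadj_a : ∀ f g : D, (inner ℂ ((a f : D) : H) ((g : D) : H) : ℂ) =
      inner ℂ ((f : D) : H) ((a' g : D) : H))
    (hadj_b : ∀ f g : D, (inner ℂ ((b f : D) : H) ((g : D) : H) : ℂ) =
      inner ℂ ((f : D) : H) ((b' g : D) : H))
    (hcomm' : ∀ f : D, b' (a' f) - a' (b' f) = f)
    (φ0 Ψ0 : D) (hφ0 : a φ0 = 0) (hΨ0 : b' Ψ0 = 0)
    (hpair : (inner ℂ ((φ0 : D) : H) ((Ψ0 : D) : H) : ℂ) = 1)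
    (φ Ψ : ℕ → D)
    (hφ : ∀ n, φ n = ((Real.sqrt n.factorial : ℂ))⁻¹ • (b ^ n) φ0)
    (hΨ : ∀ n, Ψ n = ((Real.sqrt n.factorial : ℂ))⁻¹ • (a' ^ n) Ψ0) :
    ∀ n m : ℕ, (inner ℂ ((φ n : D) : H) ((Ψ m : D) : H) : ℂ) =
      if n = m then 1 else 0 := by
  simp only [← Submodule.coe_inner] at hadj_a hadj_b hpair ⊢
  intro n m
  rw [hφ, hΨ, inner_smul_left, inner_smul_right,
    inner_pow_apply_pow_apply hadj_a hadj_b hcomm' hφ0 hΨ0, hpair, mul_one]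
  split_ifs with h
  · subst h
    have hsq : ((√(n.factorial : ℝ) : ℝ) : ℂ) ^ 2 = n.factorial := by
      exact_mod_cast Real.sq_sqrt (Nat.cast_nonneg _)
    have hne : ((√(n.factorial : ℝ) : ℝ) : ℂ) ≠ 0 := by
      exact_mod_cast (Real.sqrt_pos.mpr (Nat.cast_pos.mpr n.factorial_pos)).ne'
    rw [map_inv₀, Complex.conj_ofReal, ← hsq]
    field_simp
  · simp

/-- In the pseudo-bosonic setting (operators `a, b` with formal
adjoints `a', b'` on a dense-in-spirit subspace `D` of a complex inner product
space, satisfying `[a,b] = 1` and `[b',a'] = 1` on `D`, with `a φ₀ = 0`,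
`b' Ψ₀ = 0` and `⟨φ₀, Ψ₀⟩ = 1`), the vectors `φₙ = (1/√n!) bⁿ φ₀` and
`Ψₘ = (1/√m!) (a')ᵐ Ψ₀` are biorthogonal: `⟨φₙ, Ψₘ⟩ = δₙₘ`. -/
theorem pseudoboson_biorthogonal
    {H : Type*} [NormedAddCommGroup H] [InnerProductSpace ℂ H]
    (D : Submodule ℂ H) (a b a' b' : Module.End ℂ D)
    (hadj_a : ∀ f g : D, (inner ℂ ((a f : D) : H) ((g : D) : H) : ℂ) =
      inner ℂ ((f : D) : H) ((a' g : D) : H))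
    (hadj_b : ∀ f g : D, (inner ℂ ((b f : D) : H) ((g : D) : H) : ℂ) =
      inner ℂ ((f : D) : H) ((b' g : D) : H))
    (hcomm : ∀ f : D, a (b f) - b (a f) = f)
    (hcomm' : ∀ f : D, b' (a' f) - a' (b' f) = f)
    (φ0 Ψ0 : D) (hφ0 : a φ0 = 0) (hΨ0 : b' Ψ0 = 0)
    (hpair : (inner ℂ ((φ0 : D) : H) ((Ψ0 : D) : H) : ℂ) = 1)
    (φ Ψ : ℕ → D)
    (hφ : ∀ n, φ n = ((Real.sqrt n.factorial : ℂ))⁻¹ • (b ^ n) φ0)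
    (hΨ : ∀ n, Ψ n = ((Real.sqrt n.factorial : ℂ))⁻¹ • (a' ^ n) Ψ0) :
    ∀ n m : ℕ, (inner ℂ ((φ n : D) : H) ((Ψ m : D) : H) : ℂ) =
      if n = m then 1 else 0 :=
  pseudoboson_biorthogonal_general D a b a' b' hadj_a hadj_b hcomm' φ0 Ψ0 hφ0 hΨ0 hpair φ Ψ hφ hΨ
end
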